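/- For r = 2 and any n ≥ 1: when a new identical pair {n, n} is added to a multiset set-partition of {1^2, ..., (n-1)^2} with a blocks of multiplicity one and b blocks of multiplicity two (the two copies of n going to distinct blocks or forming new singletons), the total number of resulting multiset set-partitions obtained from this one is 1 + a + b + C(a,2) + a*b + C(b,2) + b, with the understanding that placing an n into one copy of a doubled block splits it into two distinct blocks. -/

import Mathlib

def IsMSP (r n : ℕ) (P : Multiset (Finset ℕ)) : Prop :=
  (∀ B ∈ P, B ≠ ∅) ∧
    P.bind Finset.val = (Finset.Icc 1 n).val.bind fun i => Multiset.replicate r i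

/-- Removing the element `n` from every block (and discarding blocks that become empty)
recovers the multiset set-partition of `{1^2, …, (n-1)^2}` from which a given
multiset set-partition of `{1^2, …, n^2}` arose. -/
def restrict (n : ℕ) (Q : Multiset (Finset ℕ)) : Multiset (Finset ℕ) :=
  (Q.map fun B => B.erase n).filter fun B => B ≠ ∅

/-!
An extension `Q` of `P` is determined by the `r` blocks of `Q` that contain `n`: erasing `n`
from them gives a sub-multiset `K` of size `r` of `P + {∅^r}`, an empty block standing for a
new singleton `{n}`; conversely every such `K` yields an extension. For `r = 2` these `K` are the
pairs of distinct elements among the `1 + a + b` distinct blocks of `{∅, ∅} + P`, together with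
the `1 + b` doubled elements `{B, B}`, and `C(1 + a + b, 2) + 1 + b` is the claimed sum.
-/

open Multiset

namespace Multiset

variable {α : Type*} [DecidableEq α]

theorem count_bind_val (x : α) (Q : Multiset (Finset α)) :
    count x (Q.bind Finset.val) = card (Q.filter (x ∈ ·)) := by
  induction Q using Multiset.induction_on with
  | empty => simp
  | cons B Q ih =>
    by_cases h : x ∈ B <;> simp [h, ih, count_eq_of_nodup B.nodup, add_comm]

theorem count_bind_replicate (r : ℕ) (x : α) (s : Multiset α) :
    count x (s.bind fun i => replicate r i) = r * count x s := by
  induction s using Multiset.induction_on with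
  | empty => simp
  | cons i s ih =>
    rw [cons_bind, count_add, ih, count_cons, count_replicate]
    by_cases h : x = i
    · subst h; simp [mul_add, add_comm]
    · simp [h, Ne.symm h]

theorem bind_val_map_insert {a : α} {K : Multiset (Finset α)} (hK : ∀ B ∈ K, a ∉ B) :
    (K.map (insert a)).bind Finset.val = replicate (card K) a + K.bind Finset.val := by
  rw [bind_map, bind_congr (g := fun B => a ::ₘ B.val)
    fun B hB => Finset.insert_val_of_notMem (hK B hB), bind_cons, map_const']

theorem bind_val_filter_ne_empty (K : Multiset (Finset α)) :
    (K.filter (· ≠ ∅)).bind Finset.val = K.bind Finset.val := by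
  have hempty : (K.filter fun B => ¬B ≠ ∅).bind Finset.val = 0 := by
    rw [bind_congr (g := fun _ => 0) fun B hB => by simpa using of_mem_filter hB, bind_zero]
  conv_rhs => rw [← filter_add_not (· ≠ ∅) K, add_bind, hempty, add_zero]

theorem le_replicate_add_iff {a : α} {r : ℕ} {K P : Multiset α} (ha : a ∉ P)
    (hK : card K ≤ r) : K ≤ replicate r a + P ↔ K.filter (· ≠ a) ≤ P := by
  have hPa : (replicate r a + P).filter (· ≠ a) = P := by
    rw [filter_add, filter_eq_nil.2 (fun b hb => by simp [eq_of_mem_replicate hb]), zero_add,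
      filter_eq_self.2 (fun b hb => ne_of_mem_of_not_mem hb ha)]
  constructor
  · intro h
    exact hPa ▸ filter_le_filter _ h
  · intro h
    rw [← filter_add_not (· = a) K, filter_eq']
    refine add_le_add (replicate_le_replicate _ |>.2 ((count_le_card a K).trans hK)) ?_
    simpa using h

theorem ncard_setOf_le_card_eq_two (M : Multiset α) :
    {K | K ≤ M ∧ card K = 2}.ncard =
      M.toFinset.card.choose 2 + (M.toFinset.filter (2 ≤ M.count ·)).card := by
  set D := M.toFinset.filter (2 ≤ M.count ·)
  have hset : {K | K ≤ M ∧ card K = 2} =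
      ↑((M.toFinset.powersetCard 2).image Finset.val ∪ D.image (replicate 2)) := by
    ext K
    simp only [Set.mem_ofPred_eq, Finset.coe_union, Finset.coe_image, Set.mem_union,
      Set.mem_image, Finset.mem_coe, Finset.mem_powersetCard, D, Finset.mem_filter,
      mem_toFinset]
    constructor
    · rintro ⟨hKM, hK2⟩
      obtain ⟨x, y, rfl⟩ := card_eq_two.1 hK2
      by_cases hxy : x = y
      · subst hxy
        have hx : 2 ≤ M.count x := le_count_iff_replicate_le.2 hKM
        exact Or.inr ⟨x, ⟨count_pos.1 (by omega), hx⟩, rfl⟩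
      · refine Or.inl ⟨{x, y}, ⟨?_, Finset.card_pair hxy⟩, ?_⟩
        · intro z hz
          simp only [Finset.mem_insert, Finset.mem_singleton] at hz
          rcases hz with rfl | rfl <;> simp [mem_of_le hKM]
        · simp [Finset.insert_val_of_notMem (Finset.notMem_singleton.2 hxy)]
    · rintro (⟨s, ⟨hsM, hs2⟩, rfl⟩ | ⟨x, ⟨-, hx⟩, rfl⟩)
      · exact ⟨(le_iff_subset s.nodup).2 fun z hz => by simpa using hsM hz, hs2⟩
      · exact ⟨le_count_iff_replicate_le.1 hx, card_replicate 2 x⟩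
  have hdisj :
      Disjoint ((M.toFinset.powersetCard 2).image Finset.val) (D.image (replicate 2)) := by
    refine Finset.disjoint_left.2 fun K hK hK' => ?_
    obtain ⟨s, -, rfl⟩ := Finset.mem_image.1 hK
    obtain ⟨x, -, hx⟩ := Finset.mem_image.1 hK'
    have := s.nodup
    rw [← hx] at this
    simp [replicate_succ] at this
  rw [hset, Set.ncard_coe_finset, Finset.card_union_of_disjoint hdisj,
    Finset.card_image_of_injective _ Finset.val_injective, Finset.card_powersetCard,
    Finset.card_image_of_injective _ (replicate_right_injective two_ne_zero)]

theorem card_toFinset_eq_card_filter_add (P : Multiset α) (hP : ∀ x, P.count x ≤ 2) :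
    P.toFinset.card = (P.toFinset.filter fun x => P.count x = 1).card +
      (P.toFinset.filter fun x => P.count x = 2).card := by
  rw [← Finset.card_filter_add_card_filter_not (fun x => P.count x = 1)]
  congr 2
  refine Finset.filter_congr fun x hx => ?_
  have := count_pos.2 (mem_toFinset.1 hx)
  have := hP x
  omega

end Multiset

theorem Nat.add_choose_two (a b : ℕ) : (a + b).choose 2 = a.choose 2 + a * b + b.choose 2 := by
  induction b with
  | zero => simp
  | succ b ih =>
    rw [← add_assoc, Nat.choose_succ_succ', ih, Nat.choose_succ_succ' b, Nat.choose_one_right,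
      Nat.choose_one_right]
    ring

namespace IsMSP

variable {r m : ℕ} {P : Multiset (Finset ℕ)}

theorem card_filter_mem (hP : IsMSP r m P) (x : ℕ) :
    card (P.filter (x ∈ ·)) = if x ∈ Finset.Icc 1 m then r else 0 := by
  rw [← count_bind_val, hP.2, count_bind_replicate, count_eq_of_nodup (Finset.nodup _)]
  split_ifs <;> simp_all

theorem notMem_of_lt (hP : IsMSP r m P) {x : ℕ} (hx : m < x) {B : Finset ℕ} (hB : B ∈ P) :
    x ∉ B := by
  intro hxB
  have h := hP.card_filter_mem x
  rw [if_neg (by rw [Finset.mem_Icc]; omega), card_eq_zero, filter_eq_nil] at h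
  exact h B hB hxB

theorem empty_notMem (hP : IsMSP r m P) : ∅ ∉ P :=
  fun h => hP.1 ∅ h rfl

theorem count_le (hP : IsMSP r m P) (B : Finset ℕ) : P.count B ≤ r := by
  by_cases hB : B ∈ P
  · obtain ⟨x, hx⟩ := Finset.nonempty_iff_ne_empty.2 (hP.1 B hB)
    calc P.count B = (P.filter (x ∈ ·)).count B := (count_filter_of_pos (p := (x ∈ ·)) hx).symm
      _ ≤ card (P.filter (x ∈ ·)) := count_le_card _ _
      _ ≤ r := by rw [hP.card_filter_mem x]; split_ifs <;> omega
  · simp [count_eq_zero_of_notMem hB]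

end IsMSP

-- The blocks of `K` receive `n`; an empty block of `K` stands for a new singleton `{n}`.
def extend (n : ℕ) (P K : Multiset (Finset ℕ)) : Multiset (Finset ℕ) :=
  K.map (insert n) + (P - K.filter (· ≠ ∅))

def trace (n : ℕ) (Q : Multiset (Finset ℕ)) : Multiset (Finset ℕ) :=
  (Q.filter (n ∈ ·)).map (·.erase n)

section extend

variable {r n : ℕ} {P K Q : Multiset (Finset ℕ)}

theorem restrict_eq_filter_trace_add (hQ : ∀ B ∈ Q, B ≠ ∅) :
    restrict n Q = (trace n Q).filter (· ≠ ∅) + Q.filter (n ∉ ·) := by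
  conv_lhs => rw [restrict, ← filter_add_not (n ∈ ·) Q]
  rw [map_add, filter_add, trace]
  congr 1
  rw [Multiset.map_congr rfl fun B hB =>
      Finset.erase_eq_of_notMem (of_mem_filter (p := (n ∉ ·)) hB),
    map_id', filter_eq_self.2 (fun B hB => hQ B (mem_of_mem_filter hB))]

theorem extend_restrict_trace (hQ : ∀ B ∈ Q, B ≠ ∅) :
    extend n (restrict n Q) (trace n Q) = Q := by
  have hmap : (trace n Q).map (insert n) = Q.filter (n ∈ ·) := by
    rw [trace, map_map]
    exact (Multiset.map_congr rfl fun B hB =>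
      Finset.insert_erase (of_mem_filter (p := (n ∈ ·)) hB)).trans (map_id' _)
  rw [extend, restrict_eq_filter_trace_add hQ, add_tsub_cancel_left, hmap, filter_add_not]

theorem filter_mem_extend (hP : ∀ B ∈ P, n ∉ B) :
    (extend n P K).filter (n ∈ ·) = K.map (insert n) := by
  rw [extend, filter_add, filter_eq_self.2 (by simp), filter_eq_nil.2
    (fun B hB => hP B (mem_of_le tsub_le_self hB)), add_zero]

theorem filter_notMem_extend (hP : ∀ B ∈ P, n ∉ B) :
    (extend n P K).filter (n ∉ ·) = P - K.filter (· ≠ ∅) := by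
  rw [extend, filter_add, filter_eq_nil.2 (by simp), filter_eq_self.2
    (fun B hB => hP B (mem_of_le tsub_le_self hB)), zero_add]

theorem trace_extend (hP : ∀ B ∈ P, n ∉ B) (hK : ∀ B ∈ K, n ∉ B) :
    trace n (extend n P K) = K := by
  rw [trace, filter_mem_extend hP, map_map]
  exact (Multiset.map_congr rfl fun B hB => Finset.erase_insert (hK B hB)).trans (map_id' _)

theorem restrict_extend (hPne : ∀ B ∈ P, B ≠ ∅) (hP : ∀ B ∈ P, n ∉ B) (hK : ∀ B ∈ K, n ∉ B)
    (hKP : K.filter (· ≠ ∅) ≤ P) : restrict n (extend n P K) = P := by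
  have hne : ∀ B ∈ extend n P K, B ≠ ∅ := by
    rintro B hB
    rcases mem_add.1 hB with hB | hB
    · obtain ⟨S, -, rfl⟩ := mem_map.1 hB
      exact Finset.insert_ne_empty _ _
    · exact hPne B (mem_of_le tsub_le_self hB)
  rw [restrict_eq_filter_trace_add hne, trace_extend hP hK, filter_notMem_extend hP,
    add_tsub_cancel_of_le hKP]

theorem notMem_of_le_replicate_empty_add (hn : 1 ≤ n) (hP : IsMSP r (n - 1) P)
    (hK : K ≤ replicate r ∅ + P) : ∀ B ∈ K, n ∉ B := by
  intro B hB
  rcases mem_add.1 (mem_of_le hK hB) with hB | hB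
  · simp [eq_of_mem_replicate hB]
  · exact hP.notMem_of_lt (by omega) hB

theorem isMSP_extend (hn : 1 ≤ n) (hP : IsMSP r (n - 1) P) (hK : K ≤ replicate r ∅ + P)
    (hKr : card K = r) : IsMSP r n (extend n P K) := by
  have hKP : K.filter (· ≠ ∅) ≤ P := (le_replicate_add_iff hP.empty_notMem hKr.le).1 hK
  refine ⟨fun B hB => ?_, ?_⟩
  · rcases mem_add.1 hB with hB | hB
    · obtain ⟨S, -, rfl⟩ := mem_map.1 hB
      exact Finset.insert_ne_empty _ _
    · exact hP.1 B (mem_of_le tsub_le_self hB)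
  · rw [extend, add_bind, bind_val_map_insert (notMem_of_le_replicate_empty_add hn hP hK), hKr,
      ← bind_val_filter_ne_empty, add_assoc, ← add_bind, add_tsub_cancel_of_le hKP, hP.2,
      ← Finset.insert_Icc_sub_one_right_eq_Icc hn,
      Finset.insert_val_of_notMem (by rw [Finset.mem_Icc]; omega), cons_bind]

theorem ncard_extensions (hn : 1 ≤ n) (hP : IsMSP r (n - 1) P) :
    {Q | IsMSP r n Q ∧ restrict n Q = P}.ncard =
      {K | K ≤ replicate r ∅ + P ∧ card K = r}.ncard := by
  have hPn : ∀ B ∈ P, n ∉ B := fun B => hP.notMem_of_lt (by omega)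
  have himage : {Q | IsMSP r n Q ∧ restrict n Q = P} =
      extend n P '' {K | K ≤ replicate r ∅ + P ∧ card K = r} := by
    ext Q
    constructor
    · rintro ⟨hQ, rfl⟩
      have hcard : card (trace n Q) = r := by
        rw [trace, card_map, hQ.card_filter_mem, if_pos (Finset.mem_Icc.2 ⟨hn, le_rfl⟩)]
      refine ⟨trace n Q, ⟨?_, hcard⟩, extend_restrict_trace hQ.1⟩
      rw [le_replicate_add_iff hP.empty_notMem hcard.le, restrict_eq_filter_trace_add hQ.1]
      exact le_add_right le_rfl
    · rintro ⟨K, ⟨hK, hKr⟩, rfl⟩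
      have hKn := notMem_of_le_replicate_empty_add hn hP hK
      have hKP := (le_replicate_add_iff hP.empty_notMem hKr.le).1 hK
      exact ⟨isMSP_extend hn hP hK hKr, restrict_extend hP.1 hPn hKn hKP⟩
  rw [himage, Set.InjOn.ncard_image]
  exact Set.LeftInvOn.injOn (f₁' := trace n) fun K hK =>
    trace_extend hPn (notMem_of_le_replicate_empty_add hn hP hK.1)

end extend

theorem case_count_r2 (n : ℕ) (hn : 1 ≤ n) (P : Multiset (Finset ℕ))
    (hP : IsMSP 2 (n - 1) P)
    (a b : ℕ)
    (ha : a = (P.toFinset.filter fun B => P.count B = 1).card)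
    (hb : b = (P.toFinset.filter fun B => P.count B = 2).card) :
    {Q : Multiset (Finset ℕ) | IsMSP 2 n Q ∧ restrict n Q = P}.ncard =
      1 + a + b + Nat.choose a 2 + a * b + Nat.choose b 2 + b := by
  have hsupport : (replicate 2 ∅ + P).toFinset = insert ∅ P.toFinset := by
    ext; simp
  have hdouble : (replicate 2 ∅ + P).toFinset.filter (2 ≤ (replicate 2 ∅ + P).count ·) =
      insert ∅ (P.toFinset.filter fun B => P.count B = 2) := by
    rw [hsupport, Finset.filter_insert, if_pos (by simp)]
    refine congrArg _ (Finset.filter_congr fun B hB => ?_)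
    rw [count_add, count_replicate, if_neg (hP.1 B (mem_toFinset.1 hB)).symm]
    have := hP.count_le B
    omega
  rw [ncard_extensions hn hP, ncard_setOf_le_card_eq_two, hdouble, hsupport,
    Finset.card_insert_of_notMem (by simpa using hP.empty_notMem),
    Finset.card_insert_of_notMem (by simp [hP.empty_notMem]),
    card_toFinset_eq_card_filter_add P hP.count_le, ← ha, ← hb, Nat.choose_succ_succ',
    Nat.choose_one_right, Nat.add_choose_two]
  ring
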